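/- Let r, m be nonnegative integers with 2r + 2 ≤ m, let t ≥ 1, and let 0 ≤ ε ≤ 1. Suppose that with probability at least 1 − ε, a uniformly random t-element subset U of 𝔽₂^m has the property that the degree-r evaluation vectors {u^r : u ∈ U} are linearly independent over 𝔽₂. Then for every codeword c ∈ RM(m, m−2r−2), with probability at least 1 − ε over a uniformly random t-element subset U of 𝔽₂^m, the codeword c is uniquely recoverable from the corrupted word c + 1_U: that is, for every codeword c' ∈ RM(m, m−2r−2) and every set V ⊆ 𝔽₂^m whose degree-r evaluation vectors are linearly independent over 𝔽₂, if c + 1_U = c' + 1_V then c' = c and V = U. -/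

import Mathlib

/-!
Polynomials of degree `≤ m - 2r - 2` are orthogonal to those of degree `≤ 2r + 1` (their product
has degree `< m`, so it sums to zero over `𝔽₂^m`). Hence `c + 1_U = c' + 1_V` forces
`∑_{x ∈ U} f x = ∑_{x ∈ V} f x` for every `f` of degree `≤ 2r + 1`. If the degree-`r` evaluation
vectors of `U` are independent, every `u ∈ U` has a degree-`≤ r` polynomial `P` that is `1` at `u`
and `0` on the rest of `U`; testing `P`, `P Q` and `P Q ℓ` (with `Q` the analogous indicator of
`v ∈ V`, `ℓ` affine separating `u` from `v`) shows `P` vanishes on `V`, and then `P` itself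
shows `u ∈ V`. So `U = V`, `c = c'`, and the event of the hypothesis implies that of the
conclusion.
-/

open MvPolynomial

/-- The degree-`r` evaluation vector of a point `u ∈ 𝔽₂^m`. -/
def evalVec (m r : ℕ) (u : Fin m → ZMod 2) :
    {S : Finset (Fin m) // S.card ≤ r} → ZMod 2 :=
  fun S => ∏ i ∈ S.1, u i

/-- A polynomial is multilinear if every variable occurs with individual degree at most 1. -/
def IsMultilinear {m : ℕ} (f : MvPolynomial (Fin m) (ZMod 2)) : Prop :=
  ∀ d ∈ f.support, ∀ i, d i ≤ 1

/-- The Reed–Muller code `RM(m, r)`: evaluation vectors of multilinear polynomials of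
total degree at most `r`. -/
def RM (m r : ℕ) : Set ((Fin m → ZMod 2) → ZMod 2) :=
  { w | ∃ f : MvPolynomial (Fin m) (ZMod 2),
      IsMultilinear f ∧ f.totalDegree ≤ r ∧ ∀ v, w v = eval v f }

open Classical in
/-- The characteristic vector of a set `U ⊆ 𝔽₂^m`. -/
noncomputable def chi {m : ℕ} (U : Set (Fin m → ZMod 2)) : (Fin m → ZMod 2) → ZMod 2 :=
  fun v => if v ∈ U then 1 else 0

theorem LinearIndependent.exists_dual_apply_eq {ι K V : Type*} [Field K] [AddCommGroup V]
    [Module K V] {v : ι → V} (hv : LinearIndependent K v) (φ : ι → K) :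
    ∃ f : Module.Dual K V, ∀ i, f (v i) = φ i := by
  obtain ⟨f, hf⟩ := LinearMap.exists_extend (Finsupp.linearCombination K φ ∘ₗ hv.repr)
  refine ⟨f, fun i => ?_⟩
  have := congr($hf ⟨v i, Submodule.subset_span (Set.mem_range_self i)⟩)
  simpa [hv.repr_eq_single i ⟨v i, _⟩ rfl] using this

section ReedMuller

variable {m r : ℕ}

theorem exists_totalDegree_le_eval_eq (f : Module.Dual (ZMod 2)
    ({S : Finset (Fin m) // S.card ≤ r} → ZMod 2)) :
    ∃ P : MvPolynomial (Fin m) (ZMod 2),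
      P.totalDegree ≤ r ∧ ∀ u, eval u P = f (evalVec m r u) := by
  refine ⟨∑ S, C (f (Pi.single S 1)) * ∏ i ∈ S.1, X i, ?_, fun u => ?_⟩
  · refine (totalDegree_finsetSum _ _).trans (Finset.sup_le fun S _ => ?_)
    refine (totalDegree_mul _ _).trans ?_
    rw [totalDegree_C, zero_add]
    refine (totalDegree_finsetProd _ _).trans ?_
    simpa using S.2
  · conv_rhs => rw [← Finset.univ_sum_single (evalVec m r u)]
    simp only [evalVec, map_sum, eval_mul, eval_C, eval_prod, eval_X]
    refine Finset.sum_congr rfl fun S _ => ?_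
    rw [mul_comm, ← smul_eq_mul, ← map_smul, ← Pi.single_smul', smul_eq_mul, mul_one]

theorem exists_totalDegree_le_eval_eq_ite {S : Set (Fin m → ZMod 2)}
    (hS : LinearIndependent (ZMod 2) (fun x : S => evalVec m r x.1)) (s : Fin m → ZMod 2) :
    ∃ P : MvPolynomial (Fin m) (ZMod 2),
      P.totalDegree ≤ r ∧ ∀ x ∈ S, eval x P = if x = s then 1 else 0 := by
  classical
  obtain ⟨f, hf⟩ := hS.exists_dual_apply_eq fun x => if x.1 = s then 1 else 0
  obtain ⟨P, hPdeg, hP⟩ := exists_totalDegree_le_eval_eq f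
  exact ⟨P, hPdeg, fun x hx => (hP x).trans (hf ⟨x, hx⟩)⟩

theorem sum_chi_mul_eq_of_eq_ite {S : Set (Fin m → ZMod 2)} {s : Fin m → ZMod 2} (hs : s ∈ S)
    {p g : (Fin m → ZMod 2) → ZMod 2} (hp : ∀ x ∈ S, p x = if x = s then 1 else 0) :
    ∑ x, chi S x * (p x * g x) = g s := by
  rw [Finset.sum_eq_single s (fun x _ hxs => ?_) (by simp)]
  · simp [chi, hs, hp s hs]
  · by_cases hx : x ∈ S <;> simp [chi, hx, hp, hxs]

theorem sum_mul_eval_eq_zero_of_mem_RM {k : ℕ} {c : (Fin m → ZMod 2) → ZMod 2} (hc : c ∈ RM m k)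
    {f : MvPolynomial (Fin m) (ZMod 2)} (hf : f.totalDegree + k < m) :
    ∑ v, c v * eval v f = 0 := by
  obtain ⟨g, -, hg, hcg⟩ := hc
  simp_rw [hcg, ← eval_mul]
  refine sum_eval_eq_zero _ ((totalDegree_mul _ _).trans_lt ?_)
  simp only [ZMod.card, Fintype.card_fin]
  omega

theorem subset_of_sum_chi_mul_eval_eq {U V : Set (Fin m → ZMod 2)}
    (hU : LinearIndependent (ZMod 2) (fun x : U => evalVec m r x.1))
    (hV : LinearIndependent (ZMod 2) (fun x : V => evalVec m r x.1))
    (H : ∀ f : MvPolynomial (Fin m) (ZMod 2), f.totalDegree ≤ 2 * r + 1 →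
      ∑ x, chi U x * eval x f = ∑ x, chi V x * eval x f) :
    U ⊆ V := by
  intro u hu
  by_contra huV
  obtain ⟨P, hPdeg, hP⟩ := exists_totalDegree_le_eval_eq_ite hU u
  have H' : ∀ G : MvPolynomial (Fin m) (ZMod 2), G.totalDegree ≤ r + 1 →
      eval u G = ∑ x, chi V x * (eval x P * eval x G) := fun G hG => by
    have := H (P * G) ((totalDegree_mul _ _).trans (by omega))
    simpa [sum_chi_mul_eq_of_eq_ite hu hP] using this
  have hPV : ∀ v ∈ V, eval v P = 0 := by
    intro v hv
    obtain ⟨Q, hQdeg, hQ⟩ := exists_totalDegree_le_eval_eq_ite hV v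
    obtain ⟨i, hi⟩ := Function.ne_iff.1 (ne_of_mem_of_not_mem hv huV).symm
    have hQu : eval u Q = 0 := by
      have := H' (Q * (X i - C (v i))) <| (totalDegree_mul _ _).trans <| by
        grw [hQdeg, totalDegree_sub, totalDegree_X, totalDegree_C]; simp
      simp_rw [eval_mul, mul_left_comm (eval _ P), sum_chi_mul_eq_of_eq_ite hv hQ] at this
      simpa [sub_ne_zero.2 hi] using this
    have := H' Q (by omega)
    rwa [hQu, eq_comm, Finset.sum_congr rfl fun x _ => by rw [mul_comm (eval x P)],
      sum_chi_mul_eq_of_eq_ite hv hQ] at this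
  have := H' 1 (by simp)
  simp only [map_one, mul_one] at this
  rw [Finset.sum_eq_zero fun x _ => ?_] at this
  · exact one_ne_zero this
  · by_cases hx : x ∈ V <;> simp [chi, hx, hPV]

theorem sum_chi_mul_eval_eq_of_add_chi_eq {k : ℕ} {c c' : (Fin m → ZMod 2) → ZMod 2}
    (hc : c ∈ RM m k) (hc' : c' ∈ RM m k) {U V : Set (Fin m → ZMod 2)}
    (heq : c + chi U = c' + chi V) {f : MvPolynomial (Fin m) (ZMod 2)}
    (hf : f.totalDegree + k < m) :
    ∑ x, chi U x * eval x f = ∑ x, chi V x * eval x f := by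
  have hsum := congr(∑ x, $heq x * eval x f)
  simpa only [Pi.add_apply, add_mul, Finset.sum_add_distrib, zero_add,
    sum_mul_eval_eq_zero_of_mem_RM hc hf, sum_mul_eval_eq_zero_of_mem_RM hc' hf] using hsum

theorem eq_and_eq_of_add_chi_eq (hrm : 2 * r + 2 ≤ m) {c c' : (Fin m → ZMod 2) → ZMod 2}
    (hc : c ∈ RM m (m - (2 * r + 2))) (hc' : c' ∈ RM m (m - (2 * r + 2)))
    {U V : Set (Fin m → ZMod 2)}
    (hU : LinearIndependent (ZMod 2) (fun x : U => evalVec m r x.1))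
    (hV : LinearIndependent (ZMod 2) (fun x : V => evalVec m r x.1))
    (heq : c + chi U = c' + chi V) : c' = c ∧ V = U := by
  have H : ∀ f : MvPolynomial (Fin m) (ZMod 2), f.totalDegree ≤ 2 * r + 1 →
      ∑ x, chi U x * eval x f = ∑ x, chi V x * eval x f := fun f hf =>
    sum_chi_mul_eval_eq_of_add_chi_eq hc hc' heq (by omega)
  have hVU : V = U := (subset_of_sum_chi_mul_eval_eq hV hU fun f hf => (H f hf).symm).antisymm
    (subset_of_sum_chi_mul_eval_eq hU hV H)
  subst hVU
  exact ⟨(add_right_cancel heq).symm, rfl⟩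

end ReedMuller

open scoped Classical in
theorem stmt8_general (m r t : ℕ) (hrm : 2 * r + 2 ≤ m)
    (ε : ℝ)
    -- with probability at least 1 - ε, a uniformly random t-element subset U of 𝔽₂^m
    -- has linearly independent degree-r evaluation vectors
    (hprob : (1 - ε) *
        (((Finset.univ : Finset (Fin m → ZMod 2)).powersetCard t).card : ℝ) ≤
      ((((Finset.univ : Finset (Fin m → ZMod 2)).powersetCard t).filter
        (fun (U : Finset (Fin m → ZMod 2)) => LinearIndependent (ZMod 2) (fun x : U => evalVec m r x.1))).card : ℝ)) :
    ∀ c ∈ RM m (m - (2 * r + 2)),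
      (1 - ε) *
        (((Finset.univ : Finset (Fin m → ZMod 2)).powersetCard t).card : ℝ) ≤
      ((((Finset.univ : Finset (Fin m → ZMod 2)).powersetCard t).filter
        (fun (U : Finset (Fin m → ZMod 2)) => ∀ c' ∈ RM m (m - (2 * r + 2)), ∀ V : Set (Fin m → ZMod 2),
          LinearIndependent (ZMod 2) (fun x : V => evalVec m r x.1) →
          c + chi (↑U : Set (Fin m → ZMod 2)) = c' + chi V →
          c' = c ∧ V = (↑U : Set (Fin m → ZMod 2)))).card : ℝ) := by
  intro c hc
  refine hprob.trans (Nat.cast_le.2 (Finset.card_le_card (Finset.monotone_filter_right _ ?_)))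
  intro U _ hU c' hc' V hV heq
  exact eq_and_eq_of_add_chi_eq hrm hc hc' hU hV heq

open scoped Classical in
theorem stmt8 (m r t : ℕ) (hrm : 2 * r + 2 ≤ m) (ht : 1 ≤ t)
    (ε : ℝ) (hε0 : 0 ≤ ε) (hε1 : ε ≤ 1)
    -- with probability at least 1 - ε, a uniformly random t-element subset U of 𝔽₂^m
    -- has linearly independent degree-r evaluation vectors
    (hprob : (1 - ε) *
        (((Finset.univ : Finset (Fin m → ZMod 2)).powersetCard t).card : ℝ) ≤
      ((((Finset.univ : Finset (Fin m → ZMod 2)).powersetCard t).filter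
        (fun (U : Finset (Fin m → ZMod 2)) => LinearIndependent (ZMod 2) (fun x : U => evalVec m r x.1))).card : ℝ)) :
    ∀ c ∈ RM m (m - (2 * r + 2)),
      (1 - ε) *
        (((Finset.univ : Finset (Fin m → ZMod 2)).powersetCard t).card : ℝ) ≤
      ((((Finset.univ : Finset (Fin m → ZMod 2)).powersetCard t).filter
        (fun (U : Finset (Fin m → ZMod 2)) => ∀ c' ∈ RM m (m - (2 * r + 2)), ∀ V : Set (Fin m → ZMod 2),
          LinearIndependent (ZMod 2) (fun x : V => evalVec m r x.1) →
          c + chi (↑U : Set (Fin m → ZMod 2)) = c' + chi V →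
          c' = c ∧ V = (↑U : Set (Fin m → ZMod 2)))).card : ℝ) :=
  stmt8_general m r t hrm ε hprob
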